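/- Let B > 0 and μ > 0, and let X have the gamma distribution with density f(x) = (B^{−μ/B}/Γ(μ/B)) x^{μ/B − 1} e^{−x/B} on (0,∞) (so that X has mean μ). Then for every t > 0, E(X | X > t) = μ + B t r(t). -/

import Mathlib

open MeasureTheory Set Real Filter Asymptotics Topology

/-!
With `a = μ / B`, the function `x ↦ -B x^a e^{-x/B}` is an antiderivative of
`(x - μ) x^{a-1} e^{-x/B}` on `(0, ∞)` and vanishes at infinity. Hence
`∫_t^∞ (x - μ) f(x) dx = B t f(t)`, i.e. `∫_t^∞ x f = μ F̄(t) + B t f(t)`; dividing by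
`F̄(t) > 0` gives the claim.
-/

theorem div_setIntegral_eq_add_of_setIntegral_sub_mul {X : Type*} [MeasurableSpace X]
    {ν : Measure X} {s : Set X} {f g : X → ℝ} {m ρ : ℝ}
    (hf : IntegrableOn f s ν) (hgf : IntegrableOn (fun x => g x * f x) s ν)
    (h : ∫ x in s, (g x - m) * f x ∂ν = ρ) (hF : ∫ x in s, f x ∂ν ≠ 0) :
    (∫ x in s, g x * f x ∂ν) / ∫ x in s, f x ∂ν = m + ρ / ∫ x in s, f x ∂ν := by
  have hsplit : ∫ x in s, (g x - m) * f x ∂ν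
      = (∫ x in s, g x * f x ∂ν) - m * ∫ x in s, f x ∂ν := by
    simp only [sub_mul]
    rw [integral_sub hgf (hf.const_mul m), integral_const_mul]
  rw [← h, hsplit]
  field_simp
  ring

theorem setIntegral_pos_of_forall_pos {X : Type*} [MeasurableSpace X] {ν : Measure X}
    {s : Set X} {f : X → ℝ} (hs : MeasurableSet s) (hνs : ν s ≠ 0) (hfi : IntegrableOn f s ν)
    (hf : ∀ x ∈ s, 0 < f x) : 0 < ∫ x in s, f x ∂ν := by
  rw [setIntegral_pos_iff_support_of_nonneg_ae
    (ae_restrict_of_forall_mem hs fun x hx => (hf x hx).le) hfi]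
  exact (pos_iff_ne_zero.2 hνs).trans_le (measure_mono fun x hx => ⟨(hf x hx).ne', hx⟩)

section RpowMulExp

variable {B t : ℝ}

theorem integrableOn_Ioi_rpow_mul_exp_neg_div (s : ℝ) (hB : 0 < B) (ht : 0 < t) :
    IntegrableOn (fun x => x ^ s * exp (-(x / B))) (Ioi t) := by
  have hb : 0 < (2 * B)⁻¹ := by positivity
  refine integrable_of_isBigO_exp_neg hb ?_ ?_
  · intro x hx
    exact ((continuousAt_rpow_const x s (Or.inl (ht.trans_le hx).ne')).mul
      (by fun_prop)).continuousWithinAt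
  · refine ((isLittleO_rpow_exp_pos_mul_atTop s hb).isBigO.mul
      (isBigO_refl (fun x => exp (-(x / B))) atTop)).congr_right fun x => ?_
    rw [← exp_add]
    congr 1
    field_simp
    ring

theorem integrableOn_Ioi_mul_rpow_mul_exp_neg_div (s : ℝ) (hB : 0 < B) (ht : 0 < t) :
    IntegrableOn (fun x => x * (x ^ s * exp (-(x / B)))) (Ioi t) :=
  (integrableOn_Ioi_rpow_mul_exp_neg_div (s + 1) hB ht).congr_fun (fun x hx => by
    dsimp only; rw [rpow_add_one (ht.trans hx).ne']; ring) measurableSet_Ioi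

theorem hasDerivAt_neg_mul_rpow_mul_exp_neg_div (a : ℝ) (hB : B ≠ 0) {x : ℝ} (hx : x ≠ 0) :
    HasDerivAt (fun x => -B * (x ^ a * exp (-(x / B))))
      ((x - a * B) * (x ^ (a - 1) * exp (-(x / B)))) x := by
  have hexp : HasDerivAt (fun x => exp (-(x / B))) (exp (-(x / B)) * -B⁻¹) x :=
    (hasDerivAt_exp _).comp x (((hasDerivAt_id x).div_const B).neg.congr_deriv (by simp))
  refine (((hasDerivAt_rpow_const (Or.inl hx)).mul hexp).const_mul (-B)).congr_deriv ?_
  rw [rpow_sub_one hx]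
  field_simp
  ring

theorem integral_Ioi_sub_mul_rpow_mul_exp_neg_div (a : ℝ) (hB : 0 < B) (ht : 0 < t) :
    ∫ x in Ioi t, (x - a * B) * (x ^ (a - 1) * exp (-(x / B)))
      = B * t * (t ^ (a - 1) * exp (-(t / B))) := by
  have hderiv : ∀ x ∈ Ioi t, HasDerivAt (fun x => -B * (x ^ a * exp (-(x / B))))
      ((x - a * B) * (x ^ (a - 1) * exp (-(x / B)))) x := fun x hx =>
    hasDerivAt_neg_mul_rpow_mul_exp_neg_div a hB.ne' (ht.trans hx).ne'
  have hint : IntegrableOn (fun x => (x - a * B) * (x ^ (a - 1) * exp (-(x / B)))) (Ioi t) := by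
    simp only [sub_mul]
    exact (integrableOn_Ioi_mul_rpow_mul_exp_neg_div _ hB ht).sub
      ((integrableOn_Ioi_rpow_mul_exp_neg_div _ hB ht).const_mul _)
  have hlim : Tendsto (fun x => -B * (x ^ a * exp (-(x / B)))) atTop (𝓝 0) := by
    simpa [div_eq_inv_mul] using
      (tendsto_rpow_mul_exp_neg_mul_atTop_nhds_zero a B⁻¹ (inv_pos.2 hB)).const_mul (-B)
  rw [integral_Ioi_of_hasDerivAt_of_tendsto
    (hasDerivAt_neg_mul_rpow_mul_exp_neg_div a hB.ne' ht.ne').continuousAt.continuousWithinAt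
    hderiv hint hlim, rpow_sub_one ht.ne']
  field_simp
  ring

end RpowMulExp

theorem conditional_mean_of_gamma_distribution
    (B μ : ℝ) (hB : 0 < B) (hμ : 0 < μ)
    (f : ℝ → ℝ)
    (hf : ∀ x, 0 < x →
      f x = B ^ (-(μ / B)) / Real.Gamma (μ / B) * x ^ (μ / B - 1) * Real.exp (-(x / B)))
    (Fbar : ℝ → ℝ) (hFbar : ∀ t, Fbar t = ∫ x in Set.Ioi t, f x)
    (r : ℝ → ℝ) (hr : ∀ t, r t = f t / Fbar t)
    (t : ℝ) (ht : 0 < t) :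
    (∫ x in Set.Ioi t, x * f x) / Fbar t = μ + B * t * r t := by
  set a := μ / B
  set c := B ^ (-a) / Gamma a
  have hf_eq : EqOn f (fun x => c * (x ^ (a - 1) * exp (-(x / B)))) (Ioi t) := fun x hx => by
    rw [hf x (ht.trans hx), mul_assoc]
  have hc : 0 < c := div_pos (rpow_pos_of_pos hB _) (Gamma_pos_of_pos (div_pos hμ hB))
  have hf_pos : ∀ x ∈ Ioi t, 0 < f x := fun x hx => by
    rw [hf_eq hx]
    exact mul_pos hc (mul_pos (rpow_pos_of_pos (ht.trans hx) _) (exp_pos _))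
  have hI : IntegrableOn f (Ioi t) :=
    IntegrableOn.congr_fun ((integrableOn_Ioi_rpow_mul_exp_neg_div _ hB ht).const_mul c)
      hf_eq.symm measurableSet_Ioi
  have hxI : IntegrableOn (fun x => x * f x) (Ioi t) :=
    IntegrableOn.congr_fun ((integrableOn_Ioi_mul_rpow_mul_exp_neg_div _ hB ht).const_mul c)
      (fun x hx => by rw [hf_eq hx]; ring) measurableSet_Ioi
  have hkey : ∫ x in Ioi t, (x - μ) * f x = B * t * f t := by
    have hμa : μ = a * B := (div_mul_cancel₀ μ hB.ne').symm
    rw [setIntegral_congr_fun measurableSet_Ioi fun x hx => by rw [hf_eq hx, mul_left_comm],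
      integral_const_mul, hμa, integral_Ioi_sub_mul_rpow_mul_exp_neg_div a hB ht, hf t ht]
    ring
  have hF : ∫ x in Ioi t, f x ≠ 0 :=
    (setIntegral_pos_of_forall_pos measurableSet_Ioi (by simp) hI hf_pos).ne'
  rw [hr, hFbar, mul_div_assoc']
  exact div_setIntegral_eq_add_of_setIntegral_sub_mul hI hxI hkey hF
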